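/- arXiv:2004.11183 — 2 statements merged into one kernel-verified Lean document; each statement's English description precedes it below -/
import Mathlib

section
/- For α ∈ (0,1), x', y' ∈ ℝ² with |x'| = R > 0 and |y'| ≤ R/2, there exists a constant C > 0 (independent of x', y', R) such that | (x'·y'^⊥)/|x'| · (|x'|^{α+2} - |x'-y'|^{α+2}) / (|x'-y'|^{α+2} |x'|^{α+2}) | ≤ C |y'|² / R^{α+3}, where y'^⊥ = (y'₂, -y'₁). -/
/-!
Write `p = α + 2`, `A = |x'| = R` and `B = |x' - y'|`. Since `|y'| ≤ R/2`, `B` lies in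
`[R/2, 3R/2]`, so the mean value theorem for `t ↦ t^p` bounds `|A^p - B^p|` by
`p (3R/2)^(p-1) |y'|`, while the denominator is at least `(R/2)^p R^p`. The prefactor
`(x'·y'^⊥)/|x'|` is at most `|y'|`, and the powers of `R` combine to `R^(-(p+1)) = R^(-(α+3))`.
-/

open Real Set

/-- The perpendicular vector `y'^⊥ = (y'₂, -y'₁)` in `ℝ²`. -/
noncomputable def perp (v : EuclideanSpace ℝ (Fin 2)) : EuclideanSpace ℝ (Fin 2) :=
  (WithLp.equiv 2 (Fin 2 → ℝ)).symm ![v 1, -v 0]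

lemma norm_perp (v : EuclideanSpace ℝ (Fin 2)) : ‖perp v‖ = ‖v‖ := by
  simp only [perp, EuclideanSpace.norm_eq, Fin.sum_univ_two, WithLp.equiv_symm_apply]
  simp [add_comm]

lemma abs_inner_perp_le (x y : EuclideanSpace ℝ (Fin 2)) :
    |(inner ℝ x (perp y) : ℝ)| ≤ ‖x‖ * ‖y‖ :=
  norm_perp y ▸ abs_real_inner_le_norm x (perp y)

lemma abs_rpow_sub_rpow_le {p a b M : ℝ} (hp : 1 ≤ p) (ha : a ∈ Icc 0 M) (hb : b ∈ Icc 0 M) :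
    |a ^ p - b ^ p| ≤ p * M ^ (p - 1) * |a - b| := by
  refine (convex_Icc 0 M).norm_image_sub_le_of_norm_hasDerivWithin_le
    (fun t _ => (hasDerivAt_rpow_const (Or.inr hp)).hasDerivWithinAt) (fun t ht => ?_) hb ha
  rw [norm_mul, Real.norm_of_nonneg (by linarith), Real.norm_of_nonneg (rpow_nonneg ht.1 _)]
  gcongr
  exacts [ht.1, ht.2]

lemma abs_rpow_sub_rpow_div_le {p R b : ℝ} (hp : 1 ≤ p) (hR : 0 < R)
    (hb : b ∈ Icc (R / 2) (3 / 2 * R)) :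
    |(R ^ p - b ^ p) / (b ^ p * R ^ p)| ≤
      p * (3 / 2) ^ (p - 1) * 2 ^ p * |R - b| / R ^ (p + 1) := by
  have hb₀ : 0 < b := by linarith [hb.1]
  have hnum : |R ^ p - b ^ p| ≤ p * (3 / 2 * R) ^ (p - 1) * |R - b| :=
    abs_rpow_sub_rpow_le hp ⟨hR.le, by linarith⟩ ⟨hb₀.le, hb.2⟩
  have hden : (R / 2) ^ p * R ^ p ≤ b ^ p * R ^ p := by
    gcongr
    exact hb.1
  rw [abs_div, abs_of_pos (by positivity : 0 < b ^ p * R ^ p)]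
  calc |R ^ p - b ^ p| / (b ^ p * R ^ p)
      ≤ p * (3 / 2 * R) ^ (p - 1) * |R - b| / ((R / 2) ^ p * R ^ p) := by
        gcongr
    _ = p * (3 / 2) ^ (p - 1) * 2 ^ p * |R - b| / R ^ (p + 1) := by
        rw [mul_rpow (by norm_num) hR.le, div_rpow hR.le zero_le_two, rpow_sub_one hR.ne',
          rpow_add_one hR.ne']
        have : 0 < R ^ p := by positivity
        have : (0 : ℝ) < 2 ^ p := by positivity
        field_simp

/-- Kernel estimate: for `α ∈ (0,1)`, `|x'| = R > 0`, `|y'| ≤ R/2`, there is `C > 0`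
(independent of `x', y', R`) with
`|(x'·y'^⊥)/|x'| · (|x'|^{α+2} - |x'-y'|^{α+2})/(|x'-y'|^{α+2}|x'|^{α+2})| ≤ C|y'|²/R^{α+3}`. -/
theorem stmt1 (α : ℝ) (hα : α ∈ Ioo (0:ℝ) 1) :
    ∃ C > 0, ∀ (x' y' : EuclideanSpace ℝ (Fin 2)) (R : ℝ), 0 < R → ‖x'‖ = R → ‖y'‖ ≤ R / 2 →
      abs ((inner ℝ x' (perp y') : ℝ) / ‖x'‖ *
          ((‖x'‖ ^ (α + 2) - ‖x' - y'‖ ^ (α + 2)) / (‖x' - y'‖ ^ (α + 2) * ‖x'‖ ^ (α + 2)))) ≤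
        C * ‖y'‖ ^ 2 / R ^ (α + 3) := by
  have hp : 1 ≤ α + 2 := by linarith [hα.1]
  refine ⟨(α + 2) * (3 / 2) ^ (α + 2 - 1) * 2 ^ (α + 2), by positivity, ?_⟩
  rintro x' y' R hR rfl hy
  have hB : ‖x' - y'‖ ∈ Icc (‖x'‖ / 2) (3 / 2 * ‖x'‖) :=
    ⟨by linarith [norm_sub_norm_le x' y'], by linarith [norm_sub_le x' y']⟩
  have hAB : |‖x'‖ - ‖x' - y'‖| ≤ ‖y'‖ := by simpa using abs_norm_sub_norm_le x' (x' - y')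
  have hprefactor : |(inner ℝ x' (perp y') : ℝ)| / ‖x'‖ ≤ ‖y'‖ :=
    div_le_of_le_mul₀ (norm_nonneg _) (norm_nonneg _) (by linarith [abs_inner_perp_le x' y'])
  rw [abs_mul, abs_div, abs_norm, show α + 3 = α + 2 + 1 by ring]
  calc _ ≤ ‖y'‖ * ((α + 2) * (3 / 2) ^ (α + 2 - 1) * 2 ^ (α + 2) * ‖y'‖ / ‖x'‖ ^ (α + 2 + 1)) := by
        gcongr
        exact (abs_rpow_sub_rpow_div_le hp hR hB).trans (by gcongr)
    _ = _ := by ring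
end

section
/- Let F : ℝ² × [0,∞) → ℝ² satisfy ‖F‖_∞ < ∞ and |F(x,t)-F(y,t)| ≤ D_t|x-y|, let θ(·,t) be a probability density with center B(t) and moment of inertia I(t), and let W_h be a radial cutoff with |∇W_h| ≤ C₃/h supported in {h ≤ |x| ≤ 2h}. Then |∫ dx ∇W_h(x - B(t)) · ∫ dy [F(x,t) - F(y,t)] θ(y,t) θ(x,t)| ≤ (2 C₃ ‖F‖_∞ I(t)/h³) m(h) + 3 C₃ D_t m(h), where m(h) = ∫_{|x-B(t)|>h} θ(x,t) dx. -/
open Real Set MeasureTheory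

/-! The cutoff gradient vanishes unless `h ≤ ‖x - B‖ ≤ 2h`. For such `x`, `‖F x - F y‖` is at most
`2‖F‖_∞ ≤ 2‖F‖_∞ ‖y - B‖² / h²` when `‖y - B‖ ≥ h` (Chebyshev), and at most `3Dh` by the Lipschitz
bound when `‖y - B‖ < h`. So the integrand is dominated by a product `u x * v y` with
`∫ u = m(h)` (the sphere `‖x - B‖ = h` is null) and `∫ v = (C₃/h)(2‖F‖_∞ I/h² + 3Dh)`. -/

theorem norm_integral_integral_le_integral_mul_integral {α β G : Type*} [MeasurableSpace α]
    [MeasurableSpace β] [NormedAddCommGroup G] [NormedSpace ℝ G] {μ : Measure α} {ν : Measure β}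
    {f : α → β → G} {u : α → ℝ} {v : β → ℝ} (hu : Integrable u μ) (hv : Integrable v ν)
    (hf : ∀ x y, ‖f x y‖ ≤ u x * v y) :
    ‖∫ x, ∫ y, f x y ∂ν ∂μ‖ ≤ (∫ x, u x ∂μ) * ∫ y, v y ∂ν := by
  have hinner (x : α) : ‖∫ y, f x y ∂ν‖ ≤ u x * ∫ y, v y ∂ν := by
    rw [← integral_const_mul]
    exact norm_integral_le_of_norm_le (hv.const_mul _) (.of_forall (hf x))
  rw [← integral_mul_const]
  exact norm_integral_le_of_norm_le (hu.mul_const _) (.of_forall hinner)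

theorem setIntegral_le_norm_sub_eq_setIntegral_lt_norm_sub {E G : Type*} [NormedAddCommGroup E]
    [NormedSpace ℝ E] [FiniteDimensional ℝ E] [MeasurableSpace E] [BorelSpace E]
    [NormedAddCommGroup G] [NormedSpace ℝ G] (μ : Measure E) [μ.IsAddHaarMeasure]
    (f : E → G) (B : E) {r : ℝ} (hr : r ≠ 0) :
    ∫ x in {x | r ≤ ‖x - B‖}, f x ∂μ = ∫ x in {x | r < ‖x - B‖}, f x ∂μ := by
  refine setIntegral_congr_set (ae_eq_set.2 ⟨?_, ?_⟩)
  · refine measure_mono_null (fun x hx => ?_) (Measure.addHaar_sphere_of_ne_zero μ B hr)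
    simp only [mem_sdiff, mem_ofPred_eq, not_lt] at hx
    simpa [dist_eq_norm] using le_antisymm hx.2 hx.1
  · have hsub : {x | r < ‖x - B‖} ⊆ {x | r ≤ ‖x - B‖} := fun x (hx : r < ‖x - B‖) => hx.le
    rw [sdiff_eq_empty.2 hsub, measure_empty]

theorem norm_sub_le_of_bounded_of_lipschitz {E G : Type*} [SeminormedAddCommGroup E]
    [SeminormedAddCommGroup G] {F : E → G} {CF D h : ℝ} (hFbd : ∀ x, ‖F x‖ ≤ CF)
    (hFLip : ∀ x y, ‖F x - F y‖ ≤ D * ‖x - y‖) (hD : 0 ≤ D) (hh : 0 < h) {B x : E}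
    (hx : ‖x - B‖ ≤ 2 * h) (y : E) :
    ‖F x - F y‖ ≤ 2 * CF / h ^ 2 * ‖y - B‖ ^ 2 + 3 * D * h := by
  have hCF : 0 ≤ CF := (norm_nonneg _).trans (hFbd x)
  rcases le_or_gt h ‖y - B‖ with hy | hy
  · have hfar : 1 ≤ ‖y - B‖ ^ 2 / h ^ 2 := by
      rw [one_le_div (by positivity)]; gcongr
    calc ‖F x - F y‖ ≤ 2 * CF * 1 := by linarith [norm_sub_le (F x) (F y), hFbd x, hFbd y]
      _ ≤ 2 * CF * (‖y - B‖ ^ 2 / h ^ 2) := by gcongr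
      _ ≤ 2 * CF / h ^ 2 * ‖y - B‖ ^ 2 + 3 * D * h := by
        rw [mul_div_assoc', div_mul_eq_mul_div]; nlinarith [mul_nonneg hD hh.le]
  · have hxy : ‖x - y‖ ≤ 3 * h := by
      calc ‖x - y‖ = ‖(x - B) - (y - B)‖ := by rw [sub_sub_sub_cancel_right]
        _ ≤ ‖x - B‖ + ‖y - B‖ := norm_sub_le _ _
        _ ≤ 3 * h := by linarith
    calc ‖F x - F y‖ ≤ D * (3 * h) := (hFLip x y).trans (by gcongr)
      _ ≤ 2 * CF / h ^ 2 * ‖y - B‖ ^ 2 + 3 * D * h := by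
        have : 0 ≤ 2 * CF / h ^ 2 * ‖y - B‖ ^ 2 := by positivity
        linarith

theorem abs_inner_sub_le_of_bounded_of_lipschitz {E : Type*} [NormedAddCommGroup E]
    [InnerProductSpace ℝ E] {V F : E → E} {c CF D h : ℝ} (hV : ∀ z, ‖V z‖ ≤ c)
    (hVsupp : ∀ z, 2 * h < ‖z‖ → V z = 0) (hFbd : ∀ x, ‖F x‖ ≤ CF)
    (hFLip : ∀ x y, ‖F x - F y‖ ≤ D * ‖x - y‖) (hD : 0 ≤ D) (hh : 0 < h) (B x y : E) :
    |inner ℝ (V (x - B)) (F x - F y)| ≤ c * (2 * CF / h ^ 2 * ‖y - B‖ ^ 2 + 3 * D * h) := by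
  have hc : 0 ≤ c := (norm_nonneg _).trans (hV 0)
  rcases le_or_gt ‖x - B‖ (2 * h) with hx | hx
  · exact (abs_real_inner_le_norm _ _).trans <| mul_le_mul (hV _)
      (norm_sub_le_of_bounded_of_lipschitz hFbd hFLip hD hh hx y) (norm_nonneg _) hc
  · have hCF : 0 ≤ CF := (norm_nonneg _).trans (hFbd x)
    rw [hVsupp _ hx, inner_zero_left, abs_zero]
    positivity

theorem stmt15_general (C₃ CF D h : ℝ) (hD : 0 ≤ D) (hh : 0 < h)
    (F : EuclideanSpace ℝ (Fin 2) → EuclideanSpace ℝ (Fin 2))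
    (hFbd : ∀ x, ‖F x‖ ≤ CF)
    (hFLip : ∀ x y : EuclideanSpace ℝ (Fin 2), ‖F x - F y‖ ≤ D * ‖x - y‖)
    (W : EuclideanSpace ℝ (Fin 2) → ℝ)
    (hgrad : ∀ x, ‖gradient W x‖ ≤ C₃ / h)
    (hsupp : ∀ x : EuclideanSpace ℝ (Fin 2), (‖x‖ < h ∨ 2 * h < ‖x‖) → gradient W x = 0)
    (θ : EuclideanSpace ℝ (Fin 2) → ℝ) (hθint : Integrable θ) (hθpos : ∀ x, 0 ≤ θ x)
    (hθmass : (∫ x, θ x) = 1)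
    (B : EuclideanSpace ℝ (Fin 2))
    (I : ℝ) (hI : I = ∫ x, ‖x - B‖ ^ 2 * θ x)
    (hI2 : Integrable fun x => ‖x - B‖ ^ 2 * θ x) :
    abs (∫ x, ∫ y, θ x * θ y * (inner ℝ (gradient W (x - B)) (F x - F y) : ℝ)) ≤
      2 * C₃ * CF * I / h ^ 3 * (∫ x in {x | h < ‖x - B‖}, θ x) +
        3 * C₃ * D * (∫ x in {x | h < ‖x - B‖}, θ x) := by
  set K := {x : EuclideanSpace ℝ (Fin 2) | h ≤ ‖x - B‖}
  have hK : MeasurableSet K := measurableSet_le measurable_const (by fun_prop)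
  set v := fun y => C₃ / h * (2 * CF / h ^ 2 * (‖y - B‖ ^ 2 * θ y) + 3 * D * h * θ y)
  have hv : Integrable v := ((hI2.const_mul _).add (hθint.const_mul _)).const_mul _
  have hintegrand (x y : EuclideanSpace ℝ (Fin 2)) :
      ‖θ x * θ y * inner ℝ (gradient W (x - B)) (F x - F y)‖ ≤ K.indicator θ x * v y := by
    by_cases hx : x ∈ K
    · have hinner := abs_inner_sub_le_of_bounded_of_lipschitz hgrad (fun z hz => hsupp z (.inr hz))
        hFbd hFLip hD hh B x y
      rw [indicator_of_mem hx, norm_mul, Real.norm_of_nonneg (mul_nonneg (hθpos x) (hθpos y))]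
      calc θ x * θ y * ‖inner ℝ (gradient W (x - B)) (F x - F y)‖
          ≤ θ x * θ y * (C₃ / h * (2 * CF / h ^ 2 * ‖y - B‖ ^ 2 + 3 * D * h)) := by
            gcongr; exacts [mul_nonneg (hθpos x) (hθpos y), hinner]
        _ = θ x * v y := by ring
    · rw [hsupp _ (.inl (not_le.1 hx)), inner_zero_left, mul_zero, norm_zero,
        indicator_of_notMem hx, zero_mul]
  have hmain := norm_integral_integral_le_integral_mul_integral (hθint.indicator hK) hv hintegrand
  rw [integral_indicator hK, setIntegral_le_norm_sub_eq_setIntegral_lt_norm_sub _ _ _ hh.ne',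
    integral_const_mul, integral_add (hI2.const_mul _) (hθint.const_mul _), integral_const_mul,
    integral_const_mul, ← hI, hθmass] at hmain
  rw [← Real.norm_eq_abs]
  refine hmain.trans (le_of_eq ?_)
  field_simp

/-- Estimate of the term `H₄` in Lemma 2.3: with a bounded Lipschitz field `F`, a probability
density `θ` with center `B` and moment of inertia `I`, and a cutoff `W` whose gradient is
bounded by `C₃/h` and supported in the annulus `{h ≤ |x| ≤ 2h}`,
`|∫∫ ∇W(x-B)·[F(x)-F(y)] θ(x)θ(y)| ≤ (2C₃ ‖F‖_∞ I/h³) m(h) + 3C₃ D m(h)`. -/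
theorem stmt15 (C₃ CF D h : ℝ) (hC₃ : 0 < C₃) (hCF : 0 < CF) (hD : 0 ≤ D) (hh : 0 < h)
    (F : EuclideanSpace ℝ (Fin 2) → EuclideanSpace ℝ (Fin 2))
    (hFbd : ∀ x, ‖F x‖ ≤ CF)
    (hFLip : ∀ x y : EuclideanSpace ℝ (Fin 2), ‖F x - F y‖ ≤ D * ‖x - y‖)
    (W : EuclideanSpace ℝ (Fin 2) → ℝ) (hW : ContDiff ℝ 1 W)
    (hgrad : ∀ x, ‖gradient W x‖ ≤ C₃ / h)
    (hsupp : ∀ x : EuclideanSpace ℝ (Fin 2), (‖x‖ < h ∨ 2 * h < ‖x‖) → gradient W x = 0)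
    (θ : EuclideanSpace ℝ (Fin 2) → ℝ) (hθint : Integrable θ) (hθpos : ∀ x, 0 ≤ θ x)
    (hθmass : (∫ x, θ x) = 1)
    (B : EuclideanSpace ℝ (Fin 2)) (hB : B = ∫ x, θ x • x)
    (I : ℝ) (hI : I = ∫ x, ‖x - B‖ ^ 2 * θ x)
    (hI2 : Integrable fun x => ‖x - B‖ ^ 2 * θ x) :
    abs (∫ x, ∫ y, θ x * θ y * (inner ℝ (gradient W (x - B)) (F x - F y) : ℝ)) ≤
      2 * C₃ * CF * I / h ^ 3 * (∫ x in {x | h < ‖x - B‖}, θ x) +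
        3 * C₃ * D * (∫ x in {x | h < ‖x - B‖}, θ x) :=
  stmt15_general C₃ CF D h hD hh F hFbd hFLip W hgrad hsupp θ hθint hθpos hθmass B I hI hI2
end
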